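/- Let H be a complex Hilbert space and u, v, w ∈ H with ‖w‖ = 1. Then |⟨u,w⟩ · ⟨w,v⟩| ≤ (1/2)(‖u‖·‖v‖ + |⟨u,v⟩|). -/

import Mathlib

open scoped InnerProductSpace

theorem stmt_5 {H : Type*} [NormedAddCommGroup H] [InnerProductSpace ℂ H]
    [CompleteSpace H] (u v w : H) (hw : ‖w‖ = 1) :
    ‖⟪u, w⟫_ℂ * ⟪w, v⟫_ℂ‖ ≤ (1 / 2) * (‖u‖ * ‖v‖ + ‖⟪u, v⟫_ℂ‖) := by
  set c : ℂ := ⟪w, v⟫_ℂ with hc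
  have key : ‖c • w - (1/2 : ℂ) • v‖ = (1/2) * ‖v‖ := by
    have h1 : ‖c • w - (1/2 : ℂ) • v‖ ^ 2 = ((1/2) * ‖v‖) ^ 2 := by
      rw [@norm_sub_sq ℂ]
      have hiw : ⟪c • w, (1/2 : ℂ) • v⟫_ℂ = (1/2 : ℂ) * (starRingEnd ℂ c * c) := by
        rw [inner_smul_left, inner_smul_right]; ring
      rw [hiw, mul_comm ((starRingEnd ℂ) c) c, Complex.mul_conj, norm_smul, norm_smul, hw]
      simp [Complex.normSq_eq_norm_sq]
      rw [← Complex.ofReal_pow, Complex.ofReal_re]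
      ring
    have h2 : (0:ℝ) ≤ (1/2) * ‖v‖ := by positivity
    nlinarith [norm_nonneg (c • w - (1/2 : ℂ) • v)]
  have expand : ⟪u, w⟫_ℂ * c = ⟪u, c • w - (1/2 : ℂ) • v⟫_ℂ + (1/2 : ℂ) * ⟪u, v⟫_ℂ := by
    rw [inner_sub_right, inner_smul_right, inner_smul_right]; ring
  calc ‖⟪u, w⟫_ℂ * c‖ = ‖⟪u, c • w - (1/2 : ℂ) • v⟫_ℂ + (1/2 : ℂ) * ⟪u, v⟫_ℂ‖ := by rw [expand]
    _ ≤ ‖⟪u, c • w - (1/2 : ℂ) • v⟫_ℂ‖ + ‖(1/2 : ℂ) * ⟪u, v⟫_ℂ‖ := norm_add_le _ _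
    _ ≤ ‖u‖ * ‖c • w - (1/2 : ℂ) • v‖ + (1/2) * ‖⟪u, v⟫_ℂ‖ := by
        gcongr
        · exact norm_inner_le_norm u _
        · rw [norm_mul]; simp
    _ = (1 / 2) * (‖u‖ * ‖v‖ + ‖⟪u, v⟫_ℂ‖) := by rw [key]; ring
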